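/- A channel Λ on the bipartite system A × B is causal if and only if for all states ρ and σ on A × B: whenever Tr_A(ρ) = Tr_A(σ) one has Tr_A(Λ[ρ]) = Tr_A(Λ[σ]), and whenever Tr_B(ρ) = Tr_B(σ) one has Tr_B(Λ[ρ]) = Tr_B(Λ[σ]); in particular a causal channel maps each equivalence class of states with fixed pair of marginals into a single such equivalence class. -/
import Mathlib


open Matrix BigOperators
open scoped Kronecker ComplexOrder

noncomputable section

/-- Partial trace over the `A` factor. -/
def trA {A B : Type*} [Fintype A] (ρ : Matrix (A × B) (A × B) ℂ) : Matrix B B ℂ :=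
  Matrix.of fun b b' => ∑ a, ρ (a, b) (a, b')

/-- Partial trace over the `B` factor. -/
def trB {A B : Type*} [Fintype B] (ρ : Matrix (A × B) (A × B) ℂ) : Matrix A A ℂ :=
  Matrix.of fun a a' => ∑ b, ρ (a, b) (a', b)

/-- A state: positive semidefinite matrix of trace 1. -/
def IsState {n : Type*} [Fintype n] (ρ : Matrix n n ℂ) : Prop :=
  ρ.PosSemidef ∧ ρ.trace = 1

/-- A channel: a map admitting a Kraus representation `Λ[X] = ∑ i, K i * X * (K i)ᴴ`
with `∑ i, (K i)ᴴ * K i = 1` (completely positive and trace-preserving). -/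
def IsChannel {n : Type*} [Fintype n] [DecidableEq n]
    (Λ : Matrix n n ℂ → Matrix n n ℂ) : Prop :=
  ∃ (m : ℕ) (K : Fin m → Matrix n n ℂ),
    (∀ X, Λ X = ∑ i, K i * X * (K i)ᴴ) ∧ (∑ i, (K i)ᴴ * K i = 1)

/-- The induced map `Γ ⊗ id` on the bipartite system, acting blockwise. -/
def tensIdA {A B : Type*} (Γ : Matrix A A ℂ → Matrix A A ℂ)
    (ρ : Matrix (A × B) (A × B) ℂ) : Matrix (A × B) (A × B) ℂ :=
  Matrix.of fun p q => Γ (Matrix.of fun a a' => ρ (a, p.2) (a', q.2)) p.1 q.1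

/-- The induced map `id ⊗ Γ` on the bipartite system, acting blockwise. -/
def tensIdB {A B : Type*} (Γ : Matrix B B ℂ → Matrix B B ℂ)
    (ρ : Matrix (A × B) (A × B) ℂ) : Matrix (A × B) (A × B) ℂ :=
  Matrix.of fun p q => Γ (Matrix.of fun b b' => ρ (p.1, b) (q.1, b')) p.2 q.2

/-- `Λ` is A↛B semicausal: no channel applied by Alice beforehand affects Bob's
reduced output state. -/
def SemicausalAtoB {A B : Type*} [Fintype A] [Fintype B] [DecidableEq A]
    (Λ : Matrix (A × B) (A × B) ℂ → Matrix (A × B) (A × B) ℂ) : Prop :=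
  ∀ ρ : Matrix (A × B) (A × B) ℂ, IsState ρ →
    ∀ Γ : Matrix A A ℂ → Matrix A A ℂ, IsChannel Γ →
      trA (Λ (tensIdA Γ ρ)) = trA (Λ ρ)

/-- `Λ` is A↚B semicausal: no channel applied by Bob beforehand affects Alice's
reduced output state. -/
def SemicausalBtoA {A B : Type*} [Fintype A] [Fintype B] [DecidableEq B]
    (Λ : Matrix (A × B) (A × B) ℂ → Matrix (A × B) (A × B) ℂ) : Prop :=
  ∀ ρ : Matrix (A × B) (A × B) ℂ, IsState ρ →
    ∀ Γ : Matrix B B ℂ → Matrix B B ℂ, IsChannel Γ →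
      trB (Λ (tensIdB Γ ρ)) = trB (Λ ρ)

/-- `Λ` is causal: both A↛B and A↚B semicausal. -/
def Causal {A B : Type*} [Fintype A] [Fintype B] [DecidableEq A] [DecidableEq B]
    (Λ : Matrix (A × B) (A × B) ℂ → Matrix (A × B) (A × B) ℂ) : Prop :=
  SemicausalAtoB Λ ∧ SemicausalBtoA Λ


/-! ### Auxiliary lemmas -/

lemma trace_channel {n : Type*} [Fintype n] [DecidableEq n]
    {Γ : Matrix n n ℂ → Matrix n n ℂ} (hΓ : IsChannel Γ) (X : Matrix n n ℂ) :
    (Γ X).trace = X.trace := by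
  obtain ⟨m, K, hK, hsum⟩ := hΓ
  rw [hK, Matrix.trace_sum]
  have h1 : ∀ i, (K i * X * (K i)ᴴ).trace = ((K i)ᴴ * K i * X).trace := by
    intro i
    rw [Matrix.trace_mul_cycle, Matrix.mul_assoc]
  simp_rw [h1]
  rw [← Matrix.trace_sum]
  simp_rw [← Finset.sum_mul]
  rw [hsum, Matrix.one_mul]

lemma posSemidef_kraus_sum {n : Type*} [Fintype n] [DecidableEq n]
    {m : ℕ} (K : Fin m → Matrix n n ℂ) {X : Matrix n n ℂ} (hX : X.PosSemidef) :
    (∑ i, K i * X * (K i)ᴴ).PosSemidef :=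
  Finset.sum_induction _ _ (fun _ _ ha hb => ha.add hb) Matrix.PosSemidef.zero
    (fun i _ => hX.mul_mul_conjTranspose_same (K i))

/-- The completely depolarizing channel. -/
def depol (n : Type*) [Fintype n] [DecidableEq n] : Matrix n n ℂ → Matrix n n ℂ :=
  fun X => (X.trace / (Fintype.card n : ℂ)) • 1

lemma isChannel_depol (n : Type*) [Fintype n] [DecidableEq n] [Nonempty n] :
    IsChannel (depol n) := by
  classical
  set c : ℂ := (((Real.sqrt (Fintype.card n))⁻¹ : ℝ) : ℂ) with hc
  have hcard : (0 : ℝ) < (Fintype.card n : ℝ) := by positivity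
  have hcne : ((Fintype.card n : ℂ)) ≠ 0 := by
    exact_mod_cast Nat.cast_ne_zero.mpr Fintype.card_ne_zero
  have hreal : (starRingEnd ℂ) c = c := by rw [hc, Complex.conj_ofReal]
  have hc2 : c * c = ((Fintype.card n : ℂ))⁻¹ := by
    rw [hc, ← Complex.ofReal_mul, ← mul_inv, Real.mul_self_sqrt hcard.le]
    push_cast
    ring
  set e := Fintype.equivFin (n × n)
  refine ⟨Fintype.card (n × n),
    fun i => c • Matrix.single (e.symm i).1 (e.symm i).2 (1 : ℂ), ?_, ?_⟩
  · intro X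
    ext x y
    simp only [depol, Matrix.smul_apply, Matrix.one_apply, Matrix.sum_apply,
      Matrix.conjTranspose_smul, Matrix.mul_apply, Matrix.smul_apply,
      Matrix.conjTranspose_apply, Matrix.single, Matrix.of_apply,
      smul_eq_mul, star_mul', apply_ite (star : ℂ → ℂ), star_one, star_zero]
    rw [Equiv.sum_comp e.symm (fun p : n × n =>
      ∑ x_2, (∑ x_3, (c * if p.1 = x ∧ p.2 = x_3 then 1 else 0) * X x_3 x_2) *
        (star c * if p.1 = y ∧ p.2 = x_2 then 1 else 0))]
    simp only [mul_ite, ite_mul, mul_zero, zero_mul, mul_one, one_mul,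
      Fintype.sum_prod_type, ite_and]
    simp only [Finset.sum_ite_eq, Finset.sum_ite_eq', Finset.mem_univ, if_true,
      Finset.sum_ite_irrel, Finset.sum_const_zero, Matrix.trace, Matrix.diag]
    by_cases hxy : x = y
    · simp only [hxy, if_true, Complex.star_def, hreal, mul_one]
      rw [show (∑ b, c * X b b * c) = (c * c) * ∑ b, X b b by
        rw [Finset.mul_sum]; exact Finset.sum_congr rfl fun b _ => by ring]
      rw [hc2]
      rw [div_eq_mul_inv, mul_comm]
    · simp [if_neg hxy, if_neg (show ¬ y = x from fun h => hxy h.symm)]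
  · ext x y
    simp only [Matrix.sum_apply, Matrix.conjTranspose_smul, Matrix.mul_apply,
      Matrix.smul_apply, Matrix.conjTranspose_apply, Matrix.single,
      Matrix.of_apply, smul_eq_mul, Matrix.one_apply, star_mul',
      apply_ite (star : ℂ → ℂ), star_one, star_zero]
    rw [Equiv.sum_comp e.symm (fun p : n × n =>
      ∑ x_2, star c * (if p.1 = x_2 ∧ p.2 = x then 1 else 0) *
        (c * if p.1 = x_2 ∧ p.2 = y then 1 else 0))]
    simp only [mul_ite, ite_mul, mul_zero, zero_mul, mul_one, one_mul,
      Fintype.sum_prod_type, ite_and]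
    simp only [Finset.sum_ite_eq, Finset.sum_ite_eq', Finset.mem_univ, if_true,
      Finset.sum_ite_irrel, Finset.sum_const_zero]
    by_cases hxy : x = y
    · simp only [hxy, if_true, Complex.star_def, hreal, Finset.sum_const,
        Finset.card_univ, nsmul_eq_mul, hc2]
      rw [mul_inv_cancel₀ hcne]
    · simp [if_neg hxy, if_neg (show ¬ y = x from fun h => hxy h.symm)]

lemma tensIdA_kraus {A B : Type*} [Fintype A] [Fintype B] [DecidableEq A] [DecidableEq B]
    {m : ℕ} (K : Fin m → Matrix A A ℂ) (Γ : Matrix A A ℂ → Matrix A A ℂ)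
    (hK : ∀ X, Γ X = ∑ i, K i * X * (K i)ᴴ) (ρ : Matrix (A × B) (A × B) ℂ) :
    tensIdA Γ ρ = ∑ i, (K i ⊗ₖ (1 : Matrix B B ℂ)) * ρ * ((K i) ⊗ₖ (1 : Matrix B B ℂ))ᴴ := by
  ext ⟨a, b⟩ ⟨a', b'⟩
  simp only [tensIdA, Matrix.of_apply, hK, Matrix.sum_apply, Matrix.mul_apply,
    Matrix.conjTranspose_apply, Matrix.kroneckerMap_apply, Matrix.one_apply,
    Fintype.sum_prod_type, mul_ite, ite_mul, mul_zero, zero_mul, mul_one, one_mul,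
    Finset.sum_ite_eq, Finset.sum_ite_eq', Finset.mem_univ, if_true,
    apply_ite (star : ℂ → ℂ), star_one, star_zero, star_mul', Finset.sum_mul]

lemma tensIdB_kraus {A B : Type*} [Fintype A] [Fintype B] [DecidableEq A] [DecidableEq B]
    {m : ℕ} (K : Fin m → Matrix B B ℂ) (Γ : Matrix B B ℂ → Matrix B B ℂ)
    (hK : ∀ X, Γ X = ∑ i, K i * X * (K i)ᴴ) (ρ : Matrix (A × B) (A × B) ℂ) :
    tensIdB Γ ρ = ∑ i, ((1 : Matrix A A ℂ) ⊗ₖ K i) * ρ * ((1 : Matrix A A ℂ) ⊗ₖ (K i))ᴴ := by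
  ext ⟨a, b⟩ ⟨a', b'⟩
  simp only [tensIdB, Matrix.of_apply, hK, Matrix.sum_apply, Matrix.mul_apply,
    Matrix.conjTranspose_apply, Matrix.kroneckerMap_apply, Matrix.one_apply,
    Fintype.sum_prod_type, mul_ite, ite_mul, mul_zero, zero_mul, mul_one, one_mul,
    Finset.sum_ite_eq, Finset.sum_ite_eq', Finset.mem_univ, if_true,
    apply_ite (star : ℂ → ℂ), star_one, star_zero, star_mul', Finset.sum_mul,
    Finset.mul_sum, Finset.sum_ite_irrel, Finset.sum_const_zero]

lemma trA_tensIdA {A B : Type*} [Fintype A] [Fintype B] [DecidableEq A]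
    {Γ : Matrix A A ℂ → Matrix A A ℂ} (hΓ : IsChannel Γ) (ρ : Matrix (A × B) (A × B) ℂ) :
    trA (tensIdA Γ ρ) = trA ρ := by
  ext b b'
  have := trace_channel hΓ (Matrix.of fun a a' => ρ (a, b) (a', b'))
  simpa [trA, tensIdA, Matrix.trace, Matrix.diag] using this

lemma trB_tensIdB {A B : Type*} [Fintype A] [Fintype B] [DecidableEq B]
    {Γ : Matrix B B ℂ → Matrix B B ℂ} (hΓ : IsChannel Γ) (ρ : Matrix (A × B) (A × B) ℂ) :
    trB (tensIdB Γ ρ) = trB ρ := by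
  ext a a'
  have := trace_channel hΓ (Matrix.of fun b b' => ρ (a, b) (a', b'))
  simpa [trB, tensIdB, Matrix.trace, Matrix.diag] using this

lemma trace_eq_trace_trA {A B : Type*} [Fintype A] [Fintype B]
    (ρ : Matrix (A × B) (A × B) ℂ) : (trA ρ).trace = ρ.trace := by
  simp only [trA, Matrix.trace, Matrix.diag, Matrix.of_apply, Fintype.sum_prod_type]
  exact Finset.sum_comm ..


lemma trace_eq_trace_trB {A B : Type*} [Fintype A] [Fintype B]
    (ρ : Matrix (A × B) (A × B) ℂ) : (trB ρ).trace = ρ.trace := by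
  simp [trB, Matrix.trace, Matrix.diag, Fintype.sum_prod_type]

lemma isState_tensIdA {A B : Type*} [Fintype A] [Fintype B] [DecidableEq A] [DecidableEq B]
    {Γ : Matrix A A ℂ → Matrix A A ℂ} (hΓ : IsChannel Γ)
    {ρ : Matrix (A × B) (A × B) ℂ} (hρ : IsState ρ) : IsState (tensIdA Γ ρ) := by
  obtain ⟨m, K, hK, hsum⟩ := hΓ
  constructor
  · rw [tensIdA_kraus K Γ hK ρ]
    exact posSemidef_kraus_sum _ hρ.1
  · rw [← trace_eq_trace_trA, trA_tensIdA ⟨m, K, hK, hsum⟩, trace_eq_trace_trA]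
    exact hρ.2

lemma isState_tensIdB {A B : Type*} [Fintype A] [Fintype B] [DecidableEq A] [DecidableEq B]
    {Γ : Matrix B B ℂ → Matrix B B ℂ} (hΓ : IsChannel Γ)
    {ρ : Matrix (A × B) (A × B) ℂ} (hρ : IsState ρ) : IsState (tensIdB Γ ρ) := by
  obtain ⟨m, K, hK, hsum⟩ := hΓ
  constructor
  · rw [tensIdB_kraus K Γ hK ρ]
    exact posSemidef_kraus_sum _ hρ.1
  · rw [← trace_eq_trace_trB, trB_tensIdB ⟨m, K, hK, hsum⟩, trace_eq_trace_trB]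
    exact hρ.2

lemma tensIdA_depol_congr {A B : Type*} [Fintype A] [Fintype B] [DecidableEq A]
    {ρ σ : Matrix (A × B) (A × B) ℂ} (h : trA ρ = trA σ) :
    tensIdA (depol A) ρ = tensIdA (depol A) σ := by
  ext ⟨a, b⟩ ⟨a', b'⟩
  simp only [tensIdA, Matrix.of_apply, depol, Matrix.smul_apply]
  have htr : (Matrix.of fun c c' => ρ (c, b) (c', b')).trace
      = (Matrix.of fun c c' => σ (c, b) (c', b')).trace := by
    have h2 : trA ρ b b' = trA σ b b' := by rw [h]
    simpa [trA, Matrix.trace, Matrix.diag] using h2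
  rw [htr]

lemma tensIdB_depol_congr {A B : Type*} [Fintype A] [Fintype B] [DecidableEq B]
    {ρ σ : Matrix (A × B) (A × B) ℂ} (h : trB ρ = trB σ) :
    tensIdB (depol B) ρ = tensIdB (depol B) σ := by
  ext ⟨a, b⟩ ⟨a', b'⟩
  simp only [tensIdB, Matrix.of_apply, depol, Matrix.smul_apply]
  have htr : (Matrix.of fun c c' => ρ (a, c) (a', c')).trace
      = (Matrix.of fun c c' => σ (a, c) (a', c')).trace := by
    have h2 : trB ρ a a' = trB σ a a' := by rw [h]
    simpa [trB, Matrix.trace, Matrix.diag] using h2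
  rw [htr]


/-- a channel is causal iff it preserves both the equivalence classes of
states with equal B-marginal (w.r.t. `Tr_A`) and those with equal A-marginal
(w.r.t. `Tr_B`). -/
theorem stmt_7 {A B : Type*} [Fintype A] [Fintype B] [DecidableEq A] [DecidableEq B]
    [Nonempty A] [Nonempty B]
    (Λ : Matrix (A × B) (A × B) ℂ → Matrix (A × B) (A × B) ℂ) (hΛ : IsChannel Λ) :
    Causal Λ ↔
      ∀ ρ σ : Matrix (A × B) (A × B) ℂ, IsState ρ → IsState σ →
        (trA ρ = trA σ → trA (Λ ρ) = trA (Λ σ)) ∧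
        (trB ρ = trB σ → trB (Λ ρ) = trB (Λ σ)) := by
  constructor
  · rintro ⟨h1, h2⟩ ρ σ hρ hσ
    constructor
    · intro h
      calc trA (Λ ρ) = trA (Λ (tensIdA (depol A) ρ)) := (h1 ρ hρ _ (isChannel_depol A)).symm
        _ = trA (Λ (tensIdA (depol A) σ)) := by rw [tensIdA_depol_congr h]
        _ = trA (Λ σ) := h1 σ hσ _ (isChannel_depol A)
    · intro h
      calc trB (Λ ρ) = trB (Λ (tensIdB (depol B) ρ)) := (h2 ρ hρ _ (isChannel_depol B)).symm
        _ = trB (Λ (tensIdB (depol B) σ)) := by rw [tensIdB_depol_congr h]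
        _ = trB (Λ σ) := h2 σ hσ _ (isChannel_depol B)
  · intro h
    constructor
    · intro ρ hρ Γ hΓ
      exact (h (tensIdA Γ ρ) ρ (isState_tensIdA hΓ hρ) hρ).1 (trA_tensIdA hΓ ρ)
    · intro ρ hρ Γ hΓ
      exact (h (tensIdB Γ ρ) ρ (isState_tensIdB hΓ hρ) hρ).2 (trB_tensIdB hΓ ρ)
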